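/- arXiv:2310.01956 — 4 statements merged into one kernel-verified Lean document; each statement's English description precedes it below -/
import Mathlib

section
/- For a simple matroid M of rank 3 on n elements, the beta invariant of M equals 3 − 2n + Σ_{m≥2}(m−1)t_m, where t_m is the number of rank-2 flats of size m. -/
/- Chern numbers of matroids (Mannino). Background definitions. -/

open scoped Matroid
open Finset

namespace Paper

variable {α : Type*}

/-- The rank of a set in a matroid: the maximal size of an independent subset. -/
noncomputable def mrk (M : Matroid α) (X : Set α) : ℕ :=
  sSup (Set.ncard '' {I | M.Indep I ∧ I ⊆ X})

/-- A matroid is simple if it has no loops and no parallel pairs, i.e. every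
subset of the ground set with at most two elements is independent. -/
def Simple (M : Matroid α) : Prop := ∀ e ∈ M.E, ∀ f ∈ M.E, M.Indep {e, f}

/-- A matroid is loopless if every singleton of the ground set is independent. -/
def Loopless (M : Matroid α) : Prop := ∀ e ∈ M.E, M.Indep {e}

/-- A coloop is an element contained in every base. -/
def Coloop (M : Matroid α) (e : α) : Prop := e ∈ M.E ∧ ∀ B, M.IsBase B → e ∈ B

/-- `t M m` is the number of rank-2 flats of `M` of size `m`. -/
noncomputable def t (M : Matroid α) (m : ℕ) : ℕ :=
  {F : Set α | M.IsFlat F ∧ mrk M F = 2 ∧ F.ncard = m}.ncard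

/-- The first Chern number `c̄₁²` of a simple rank-3 matroid,
`9 - 5n + ∑_{m ≥ 2} (3m-4) t_m`. -/
noncomputable def c1sq (M : Matroid α) : ℤ :=
  9 - 5 * (M.E.ncard : ℤ) +
    ∑ m ∈ Finset.Icc 2 M.E.ncard, (3 * (m : ℤ) - 4) * t M m

/-- The second Chern number `c̄₂` of a simple rank-3 matroid,
`3 - 2n + ∑_{m ≥ 2} (m-1) t_m`. -/
noncomputable def c2 (M : Matroid α) : ℤ :=
  3 - 2 * (M.E.ncard : ℤ) +
    ∑ m ∈ Finset.Icc 2 M.E.ncard, ((m : ℤ) - 1) * t M m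

/-- The beta invariant of a matroid on a finite type (Crapo's formula):
`β(M) = (-1)^{r(E)} ∑_{S ⊆ E} (-1)^{|S|} r(S)`. -/
noncomputable def beta (M : Matroid α) [Fintype α] : ℤ :=
  (-1) ^ (mrk M M.E) *
    ∑ S ∈ (Set.toFinite M.E).toFinset.powerset,
      (-1 : ℤ) ^ S.card * (mrk M (S : Set α) : ℤ)

/-- `M` is the uniform matroid of rank `r` on its ground set: the independent
sets are exactly the finite subsets of the ground set of size at most `r`. -/
def IsUniform (M : Matroid α) (r : ℕ) : Prop :=
  ∀ I, I ⊆ M.E → (M.Indep I ↔ I.Finite ∧ I.ncard ≤ r)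

end Paper

open Paper

/-!
By Crapo's formula and `r(E) = 3`, writing `3 - r(S)` as the number of `k < 3` with `r(S) ≤ k`
and using that `∑_{S ⊆ E} (-1)^|S| = 0`, one gets `β(M) = A₀ + A₁ + A₂` with
`A_k = ∑_{r(S) ≤ k} (-1)^|S|`. In a simple matroid the sets of rank at most `1` are exactly the
sets of size at most `1`, so `A₀ = 1` and `A₁ = 1 - n`. A set of rank `2` spans a unique line `L`,
and the subsets of `L` spanning it are those of size at least `2`, whose alternating count is
`|L| - 1`; hence `A₂ = 1 - n + ∑_L (|L| - 1)`.
-/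

namespace Paper

lemma sum_mul_natCast_eq_sum_range_sum_filter_lt {ι R : Type*} [NonAssocSemiring R]
    (s : Finset ι) (w : ι → R) (f : ι → ℕ) {r : ℕ} (hf : ∀ i ∈ s, f i ≤ r) :
    ∑ i ∈ s, w i * f i = ∑ k ∈ range r, ∑ i ∈ s with k < f i, w i := by
  simp_rw [sum_filter]
  rw [sum_comm]
  refine sum_congr rfl fun i hi => ?_
  have hlt : (range r).filter (· < f i) = range (f i) := by
    ext k
    simp only [mem_filter, mem_range]
    have := hf i hi
    omega
  rw [← sum_filter, sum_const, hlt, card_range, nsmul_eq_mul']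

lemma sum_filter_le_succ {ι R : Type*} [AddCommMonoid R] (s : Finset ι) (f : ι → ℕ)
    (w : ι → R) (k : ℕ) :
    ∑ i ∈ s with f i ≤ k + 1, w i =
      ∑ i ∈ s with f i ≤ k, w i + ∑ i ∈ s with f i = k + 1, w i := by
  simp_rw [sum_filter, ← sum_add_distrib]
  refine sum_congr rfl fun i _ => ?_
  split_ifs <;> first | omega | simp

lemma sum_powerset_filter_card_le_one {β : Type*} [DecidableEq β] (T : Finset β) :
    ∑ S ∈ T.powerset with S.card ≤ 1, (-1 : ℤ) ^ S.card = 1 - T.card := by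
  have hsplit : {S ∈ T.powerset | S.card ≤ 1} = T.powersetCard 0 ∪ T.powersetCard 1 := by
    ext S
    simp only [mem_filter, mem_powerset, mem_union, mem_powersetCard,
      Nat.le_one_iff_eq_zero_or_eq_one]
    tauto
  rw [hsplit, sum_union (T.pairwise_disjoint_powersetCard zero_ne_one)]
  simp [sum_powersetCard, sub_eq_add_neg]

lemma sum_powerset_filter_two_le_card {β : Type*} [DecidableEq β] {T : Finset β}
    (hT : T.Nonempty) : ∑ S ∈ T.powerset with 2 ≤ S.card, (-1 : ℤ) ^ S.card = T.card - 1 := by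
  have htotal := sum_filter_add_sum_filter_not T.powerset (fun S => S.card ≤ 1)
    (fun S => (-1 : ℤ) ^ S.card)
  simp only [not_le, Nat.lt_iff_add_one_le] at htotal
  rw [sum_powerset_neg_one_pow_card_of_nonempty hT, sum_powerset_filter_card_le_one] at htotal
  linarith

open Set Matroid

variable {α : Type*} {M : Matroid α} {I X F : Set α}

section Rank

variable [Finite α]

lemma mrk_eq_ncard_of_isBasis' (hI : M.IsBasis' I X) : mrk M X = I.ncard := by
  have hbdd : BddAbove (ncard '' {J | M.Indep J ∧ J ⊆ X}) :=
    ⟨Nat.card α, by rintro _ ⟨J, -, rfl⟩; exact ncard_le_card J⟩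
  refine le_antisymm (csSup_le ⟨0, ∅, ⟨M.empty_indep, empty_subset X⟩, ncard_empty α⟩ ?_)
    (le_csSup hbdd ⟨I, ⟨hI.indep, hI.subset⟩, rfl⟩)
  rintro _ ⟨J, ⟨hJ, hJX⟩, rfl⟩
  have hle : J.encard ≤ I.encard := hI.encard_eq_eRk ▸ hJ.encard_le_eRk_of_subset hJX
  rwa [← (toFinite J).cast_ncard_eq, ← (toFinite I).cast_ncard_eq, Nat.cast_le] at hle

lemma cast_mrk (M : Matroid α) (X : Set α) : (mrk M X : ℕ∞) = M.eRk X := by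
  obtain ⟨I, hI⟩ := M.exists_isBasis' X
  rw [mrk_eq_ncard_of_isBasis' hI, (toFinite I).cast_ncard_eq, hI.encard_eq_eRk]

lemma mrk_mono (M : Matroid α) : Monotone (mrk M) := fun X Y h => by
  exact_mod_cast (cast_mrk M X).trans_le ((M.eRk_mono h).trans_eq (cast_mrk M Y).symm)

lemma mrk_le_ncard (M : Matroid α) (X : Set α) : mrk M X ≤ X.ncard := by
  have h := M.eRk_le_encard X
  rwa [← cast_mrk, ← (toFinite X).cast_ncard_eq, Nat.cast_le] at h

lemma mrk_eq_ncard_of_indep (hI : M.Indep I) : mrk M I = I.ncard :=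
  mrk_eq_ncard_of_isBasis' hI.isBasis_self.isBasis'

lemma mrk_closure (M : Matroid α) (X : Set α) : mrk M (M.closure X) = mrk M X := by
  exact_mod_cast (cast_mrk M _).trans ((M.eRk_closure_eq X).trans (cast_mrk M X).symm)

lemma IsFlat.closure_eq_of_subset_of_mrk_le (hF : M.IsFlat F) (hXF : X ⊆ F)
    (h : mrk M F ≤ mrk M X) : M.closure X = F := by
  have h' : M.eRk F ≤ M.eRk X := by rw [← cast_mrk, ← cast_mrk]; exact_mod_cast h
  rw [(M.isRkFinite_of_finite (toFinite X)).closure_eq_closure_of_subset_of_eRk_ge_eRk hXF h',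
    hF.closure]

end Rank

lemma Simple.indep_of_ncard_le_two (hs : Simple M) (hX : X ⊆ M.E) (hfin : X.Finite)
    (h : X.ncard ≤ 2) : M.Indep X := by
  obtain h0 | h1 | h2 : X.ncard = 0 ∨ X.ncard = 1 ∨ X.ncard = 2 := by omega
  · rw [(ncard_eq_zero hfin).mp h0]
    exact M.empty_indep
  · obtain ⟨a, rfl⟩ := ncard_eq_one.mp h1
    simpa using hs a (hX rfl) a (hX rfl)
  · obtain ⟨a, b, -, rfl⟩ := ncard_eq_two.mp h2
    exact hs a (hX (by simp)) b (hX (by simp))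

lemma Simple.min_ncard_two_le_mrk [Finite α] (hs : Simple M) (hX : X ⊆ M.E) :
    min X.ncard 2 ≤ mrk M X := by
  obtain ⟨Y, hYX, hY⟩ := exists_subset_card_eq (min_le_left X.ncard 2)
  have hYi : M.Indep Y :=
    hs.indep_of_ncard_le_two (hYX.trans hX) (toFinite Y) (hY ▸ min_le_right _ _)
  exact hY ▸ (mrk_eq_ncard_of_indep hYi).symm.trans_le (mrk_mono M hYX)

-- In `∑ S ∈ s with p S, _` the ascription `(S : Finset α)` inside `p` stops Lean from
-- elaborating `S` as a `Set α` (and `s` as a set of sets).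

lemma beta_eq_sum_range [Fintype α] (M : Matroid α) (hE : M.E.Nonempty) :
    beta M = (-1) ^ (mrk M M.E + 1) * ∑ k ∈ Finset.range (mrk M M.E),
      ∑ S ∈ (toFinite M.E).toFinset.powerset with mrk M (S : Finset α) ≤ k,
        (-1 : ℤ) ^ S.card := by
  set T := (toFinite M.E).toFinset
  have hTne : T.Nonempty := by simpa [T] using hE
  have hupper : ∀ S ∈ T.powerset, mrk M S ≤ mrk M M.E := fun S hS =>
    mrk_mono M (by simpa [T] using Finset.mem_powerset.mp hS)
  have hcompl : ∀ k, ∑ S ∈ T.powerset with k < mrk M (S : Finset α), (-1 : ℤ) ^ S.card =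
      -∑ S ∈ T.powerset with mrk M (S : Finset α) ≤ k, (-1 : ℤ) ^ S.card := fun k => by
    have h := Finset.sum_filter_add_sum_filter_not T.powerset
      (fun S => mrk M (S : Finset α) ≤ k) (fun S => (-1 : ℤ) ^ S.card)
    simp only [not_le, Finset.sum_powerset_neg_one_pow_card_of_nonempty hTne] at h
    linear_combination h
  rw [beta, sum_mul_natCast_eq_sum_range_sum_filter_lt _ _ _ hupper]
  simp only [hcompl, Finset.sum_neg_distrib, pow_succ]
  ring

section Lines

variable [Finite α]

noncomputable def lines (M : Matroid α) : Finset (Set α) :=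
  (toFinite {L : Set α | M.IsFlat L ∧ mrk M L = 2}).toFinset

lemma mem_lines {L : Set α} : L ∈ lines M ↔ M.IsFlat L ∧ mrk M L = 2 := by
  simp [lines]

lemma t_eq_card_filter_lines (m : ℕ) : t M m = #{L ∈ lines M | L.ncard = m} := by
  rw [t, ← ncard_coe_finset]
  congr 1
  ext L
  simp [mem_lines, and_assoc]

lemma sum_lines_eq_sum_t :
    ∑ L ∈ lines M, ((L.ncard : ℤ) - 1) =
      ∑ m ∈ Finset.Icc 2 M.E.ncard, ((m : ℤ) - 1) * t M m := by
  have hmaps : ∀ L ∈ lines M, L.ncard ∈ Finset.Icc 2 M.E.ncard := fun L hL => by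
    obtain ⟨hflat, hrk⟩ := mem_lines.mp hL
    exact Finset.mem_Icc.mpr ⟨hrk ▸ mrk_le_ncard M L, ncard_le_ncard hflat.subset_ground⟩
  rw [← Finset.sum_fiberwise_of_maps_to hmaps]
  refine Finset.sum_congr rfl fun m _ => ?_
  rw [t_eq_card_filter_lines, Finset.sum_congr rfl fun L hL => by rw [(Finset.mem_filter.mp hL).2],
    Finset.sum_const, nsmul_eq_mul, mul_comm]

variable {T : Finset α}

lemma Simple.filter_mrk_le_eq_filter_card_le (hs : Simple M) (hT : (T : Set α) = M.E) {k : ℕ}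
    (hk : k ≤ 1) :
    {S ∈ T.powerset | mrk M (S : Finset α) ≤ k} = {S ∈ T.powerset | S.card ≤ k} := by
  refine Finset.filter_congr fun S hS => ?_
  have hSE : (S : Set α) ⊆ M.E := hT ▸ Finset.coe_subset.mpr (Finset.mem_powerset.mp hS)
  have hlow := hs.min_ncard_two_le_mrk hSE
  have hup := mrk_le_ncard M S
  rw [ncard_coe_finset] at hlow hup
  omega

lemma Simple.sum_powerset_filter_mrk_le_zero (hs : Simple M) (hT : (T : Set α) = M.E) :
    ∑ S ∈ T.powerset with mrk M (S : Finset α) ≤ 0, (-1 : ℤ) ^ S.card = 1 := by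
  classical
  rw [hs.filter_mrk_le_eq_filter_card_le hT zero_le_one]
  simp [Finset.filter_eq']

lemma Simple.sum_powerset_filter_mrk_le_one (hs : Simple M) (hT : (T : Set α) = M.E) :
    ∑ S ∈ T.powerset with mrk M (S : Finset α) ≤ 1, (-1 : ℤ) ^ S.card = 1 - T.card := by
  classical
  rw [hs.filter_mrk_le_eq_filter_card_le hT le_rfl, sum_powerset_filter_card_le_one]

open Classical in
lemma Simple.filter_closure_eq_line (hs : Simple M) (hT : (T : Set α) = M.E) {L : Set α}
    (hL : L ∈ lines M) :
    {S ∈ {S ∈ T.powerset | mrk M (S : Finset α) = 2} | M.closure (S : Finset α) = L} =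
      {S ∈ (toFinite L).toFinset.powerset | 2 ≤ S.card} := by
  obtain ⟨hflat, hrk⟩ := mem_lines.mp hL
  ext S
  simp only [Finset.mem_filter, Finset.mem_powerset, ← Finset.coe_subset, hT,
    Finite.coe_toFinset]
  constructor
  · rintro ⟨⟨hSE, hSrk⟩, rfl⟩
    exact ⟨M.subset_closure S hSE, ncard_coe_finset S ▸ hSrk ▸ mrk_le_ncard M S⟩
  · rintro ⟨hSL, hcard⟩
    have hSE := hSL.trans hflat.subset_ground
    have hlow := hs.min_ncard_two_le_mrk hSE
    have hup := hrk ▸ mrk_mono M hSL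
    rw [ncard_coe_finset] at hlow
    have hSrk : mrk M S = 2 := by omega
    exact ⟨⟨hSE, hSrk⟩, IsFlat.closure_eq_of_subset_of_mrk_le hflat hSL (hrk.trans hSrk.symm).le⟩

lemma Simple.sum_powerset_filter_mrk_eq_two (hs : Simple M) (hT : (T : Set α) = M.E) :
    ∑ S ∈ T.powerset with mrk M (S : Finset α) = 2, (-1 : ℤ) ^ S.card =
      ∑ L ∈ lines M, ((L.ncard : ℤ) - 1) := by
  classical
  have hmaps : ∀ S ∈ {S ∈ T.powerset | mrk M (S : Finset α) = 2}, M.closure S ∈ lines M :=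
    fun S hS =>
      mem_lines.mpr ⟨M.isFlat_closure _, (mrk_closure M S).trans (Finset.mem_filter.mp hS).2⟩
  rw [← Finset.sum_fiberwise_of_maps_to hmaps]
  refine Finset.sum_congr rfl fun L hL => ?_
  have hL2 : 2 ≤ L.ncard := (mem_lines.mp hL).2 ▸ mrk_le_ncard M L
  have hLne : (toFinite L).toFinset.Nonempty := by
    rw [← Finset.card_pos, ← ncard_eq_toFinset_card L]
    omega
  rw [hs.filter_closure_eq_line hT hL, sum_powerset_filter_two_le_card hLne,
    ncard_eq_toFinset_card L]

end Lines

end Paper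

theorem stmt_3_general {α : Type*} [Fintype α] (M : Matroid α) (n : ℕ)
    (hn : M.E.ncard = n)
    (hs : Simple M) (hr : mrk M M.E = 3) :
    beta M = 3 - 2 * (n : ℤ) + ∑ m ∈ Finset.Icc 2 n, ((m : ℤ) - 1) * t M m := by
  set T := (Set.toFinite M.E).toFinset
  have hT : (T : Set α) = M.E := Set.Finite.coe_toFinset _
  have hTn : T.card = n := by rw [← hn, Set.ncard_eq_toFinset_card M.E]
  have hE : M.E.Nonempty :=
    Set.nonempty_of_ncard_ne_zero (by have := mrk_le_ncard M M.E; omega)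
  have hle_two := sum_filter_le_succ T.powerset (fun S => mrk M S) (fun S => (-1 : ℤ) ^ S.card) 1
  rw [beta_eq_sum_range M hE, hr, Finset.sum_range_succ, Finset.sum_range_succ,
    Finset.sum_range_one, hle_two, hs.sum_powerset_filter_mrk_le_zero hT,
    hs.sum_powerset_filter_mrk_le_one hT, hs.sum_powerset_filter_mrk_eq_two hT,
    sum_lines_eq_sum_t, hn, hTn]
  ring

/-- The beta invariant of a simple rank-3 matroid on `n` elements equals
`3 - 2n + ∑_{m≥2}(m-1)t_m`. -/
theorem stmt_3 {α : Type*} [Fintype α] (M : Matroid α) (n : ℕ)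
    (hground : M.E = Set.univ) (hn : M.E.ncard = n)
    (hs : Simple M) (hr : mrk M M.E = 3) :
    beta M = 3 - 2 * (n : ℤ) + ∑ m ∈ Finset.Icc 2 n, ((m : ℤ) - 1) * t M m :=
  stmt_3_general M n hn hs hr
end

section
/- Define for a simple rank-3 matroid M on n elements c̄₂(M) = 3 − 2n + Σ_{m≥2}(m−1)t_m, where t_m counts rank-2 flats of size m. Then c̄₂(M) ≥ 0. -/
/- Chern numbers of matroids (Mannino). Background definitions. -/

open scoped Matroid
open Finset

open Paper

/-!
Fix a point `e`. The lines through `e` partition the other `n - 1` points, so they contribute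
`n - 1` to `∑_L (|L| - 1) = ∑_{m ≥ 2} (m - 1) t_m`. For the lines avoiding `e`, take a second point
`f`, the line `L₀ = ef` and a point `g ∉ L₀`: the lines through `f` other than `L₀` cover the
`n - |L₀|` points off `L₀`, and the lines joining `g` to the `|L₀| - 2` points of `L₀ ∖ {e, f}`
avoid `e` and `f`. Hence `∑_L (|L| - 1) ≥ (n - 1) + (n - |L₀|) + (|L₀| - 2) = 2n - 3`.
-/

/-- Unlike the usual notion, lines with fewer than two points are allowed. -/
structure IsLinearSpace {α : Type*} (E : Finset α) (𝓛 : Finset (Finset α)) : Prop where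
  subset_of_mem : ∀ L ∈ 𝓛, L ⊆ E
  exists_mem_of_ne : ∀ x ∈ E, ∀ y ∈ E, x ≠ y → ∃ L ∈ 𝓛, x ∈ L ∧ y ∈ L
  eq_of_mem_of_mem : ∀ L ∈ 𝓛, ∀ L' ∈ 𝓛, ∀ x y, x ≠ y →
    x ∈ L → y ∈ L → x ∈ L' → y ∈ L' → L = L'

section LinearSpace

variable {α : Type*}

theorem card_le_sum_card_sub_one_of_cover {p : α} {𝓐 : Finset (Finset α)} {X : Finset α}
    (hp : ∀ L ∈ 𝓐, p ∈ L) (hpX : p ∉ X) (hX : ∀ x ∈ X, ∃ L ∈ 𝓐, x ∈ L) :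
    X.card ≤ ∑ L ∈ 𝓐, (L.card - 1) := by
  classical
  have hcover : X ⊆ 𝓐.biUnion (·.erase p) := fun x hx => by
    obtain ⟨L, hL, hxL⟩ := hX x hx
    exact mem_biUnion.mpr ⟨L, hL, mem_erase.mpr ⟨fun h => hpX (h ▸ hx), hxL⟩⟩
  calc X.card ≤ (𝓐.biUnion (·.erase p)).card := card_le_card hcover
    _ ≤ ∑ L ∈ 𝓐, (L.erase p).card := card_biUnion_le
    _ = ∑ L ∈ 𝓐, (L.card - 1) := sum_congr rfl fun L hL => card_erase_of_mem (hp L hL)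

theorem IsLinearSpace.two_mul_card_le {E : Finset α} {𝓛 : Finset (Finset α)}
    (hS : IsLinearSpace E 𝓛) (hE : E ∉ 𝓛) : 2 * E.card ≤ ∑ L ∈ 𝓛, (L.card - 1) + 3 := by
  classical
  rcases le_or_gt E.card 1 with hsmall | hlarge
  · omega
  obtain ⟨e, he, f, hf, hef⟩ := one_lt_card.mp hlarge
  obtain ⟨L₀, hL₀, heL₀, hfL₀⟩ := hS.exists_mem_of_ne e he f hf hef
  have hL₀E := hS.subset_of_mem L₀ hL₀
  obtain ⟨g, hg, hgL₀⟩ : ∃ g ∈ E, g ∉ L₀ := by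
    by_contra! h
    exact hE (subset_antisymm hL₀E h ▸ hL₀)
  have eq_L₀ : ∀ L ∈ 𝓛, ∀ x y, x ≠ y → x ∈ L → y ∈ L → x ∈ L₀ → y ∈ L₀ → L = L₀ :=
    fun L hL x y hxy hx hy hx₀ hy₀ => hS.eq_of_mem_of_mem L hL L₀ hL₀ x y hxy hx hy hx₀ hy₀
  have through_e : (E.erase e).card ≤ ∑ L ∈ 𝓛 with e ∈ L, (L.card - 1) := by
    refine card_le_sum_card_sub_one_of_cover (p := e) (by simp) (notMem_erase e E) ?_
    intro x hx
    obtain ⟨L, hL, hxL, heL⟩ :=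
      hS.exists_mem_of_ne x (mem_of_mem_erase hx) e he (ne_of_mem_erase hx)
    exact ⟨L, mem_filter.mpr ⟨hL, heL⟩, hxL⟩
  have through_f : (E \ L₀).card ≤ ∑ L ∈ {L ∈ 𝓛 | e ∉ L} with f ∈ L, (L.card - 1) := by
    refine card_le_sum_card_sub_one_of_cover (p := f) (by simp)
      (fun h => (mem_sdiff.mp h).2 hfL₀) ?_
    intro x hx
    obtain ⟨hxE, hxL₀⟩ := mem_sdiff.mp hx
    have hxf : x ≠ f := fun h => hxL₀ (h ▸ hfL₀)
    obtain ⟨L, hL, hxL, hfL⟩ := hS.exists_mem_of_ne x hxE f hf hxf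
    have heL : e ∉ L := fun heL => hxL₀ (eq_L₀ L hL e f hef heL hfL heL₀ hfL₀ ▸ hxL)
    exact ⟨L, by simp [hL, heL, hfL], hxL⟩
  have through_g : ((L₀.erase e).erase f).card ≤
      ∑ L ∈ {L ∈ {L ∈ 𝓛 | e ∉ L} | f ∉ L} with g ∈ L, (L.card - 1) := by
    refine card_le_sum_card_sub_one_of_cover (p := g) (by simp)
      (fun h => hgL₀ (mem_of_mem_erase (mem_of_mem_erase h))) ?_
    intro x hx
    have hxe := ne_of_mem_erase (mem_of_mem_erase hx)
    have hxf := ne_of_mem_erase hx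
    have hxL₀ := mem_of_mem_erase (mem_of_mem_erase hx)
    obtain ⟨L, hL, hxL, hgL⟩ :=
      hS.exists_mem_of_ne x (hL₀E hxL₀) g hg fun h => hgL₀ (h ▸ hxL₀)
    have heL : e ∉ L := fun heL => hgL₀ (eq_L₀ L hL e x (Ne.symm hxe) heL hxL heL₀ hxL₀ ▸ hgL)
    have hfL : f ∉ L := fun hfL => hgL₀ (eq_L₀ L hL f x (Ne.symm hxf) hfL hxL hfL₀ hxL₀ ▸ hgL)
    exact ⟨L, by simp [hL, heL, hfL, hgL], hxL⟩
  have hsplit : ∑ L ∈ 𝓛 with e ∈ L, (L.card - 1) + ∑ L ∈ {L ∈ 𝓛 | e ∉ L} with f ∈ L, (L.card - 1)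
      + ∑ L ∈ {L ∈ {L ∈ 𝓛 | e ∉ L} | f ∉ L} with g ∈ L, (L.card - 1)
      ≤ ∑ L ∈ 𝓛, (L.card - 1) := by
    rw [← sum_filter_add_sum_filter_not 𝓛 (e ∈ ·),
      ← sum_filter_add_sum_filter_not (𝓛.filter (e ∉ ·)) (f ∈ ·), ← add_assoc]
    exact Nat.add_le_add_left (sum_le_sum_of_subset (filter_subset _ _)) _
  have hL₀two : 2 ≤ L₀.card := one_lt_card.mpr ⟨e, heL₀, f, hfL₀, hef⟩
  have hL₀card : L₀.card ≤ E.card := card_le_card hL₀E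
  rw [card_erase_of_mem he] at through_e
  rw [card_erase_of_mem (mem_erase.mpr ⟨Ne.symm hef, hfL₀⟩), card_erase_of_mem heL₀]
    at through_g
  rw [card_sdiff_of_subset hL₀E] at through_f
  omega

end LinearSpace

section Matroid

variable {α : Type*} {M : Matroid α}

theorem mrk_eq_ncard_of_isBasis (hE : M.E.Finite) {I X : Set α} (hI : M.IsBasis I X) :
    mrk M X = I.ncard := by
  have hfin : ∀ {J}, M.Indep J → J.Finite := fun hJ => hE.subset hJ.subset_ground
  refine le_antisymm (csSup_le ⟨_, I, ⟨hI.indep, hI.subset⟩, rfl⟩ ?_)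
    (le_csSup ⟨M.E.ncard, ?_⟩ ⟨I, ⟨hI.indep, hI.subset⟩, rfl⟩)
  · rintro _ ⟨J, ⟨hJ, hJX⟩, rfl⟩
    have h := (hJ.encard_le_eRk_of_subset hJX).trans_eq hI.eRk_eq_encard
    rwa [← (hfin hJ).cast_ncard_eq, ← (hfin hI.indep).cast_ncard_eq, Nat.cast_le] at h
  · rintro _ ⟨J, ⟨hJ, -⟩, rfl⟩
    exact Set.ncard_le_ncard hJ.subset_ground hE

theorem two_le_ncard_of_mrk_eq_two (hE : M.E.Finite) {F : Set α} (hF : F ⊆ M.E)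
    (h2 : mrk M F = 2) : 2 ≤ F.ncard := by
  obtain ⟨I, hI⟩ := M.exists_isBasis F hF
  rw [mrk_eq_ncard_of_isBasis hE hI] at h2
  exact h2 ▸ Set.ncard_le_ncard hI.subset (hE.subset hF)

theorem mrk_closure_pair (hE : M.E.Finite) (hs : Simple M) {x y : α}
    (hx : x ∈ M.E) (hy : y ∈ M.E) (hxy : x ≠ y) : mrk M (M.closure {x, y}) = 2 := by
  rw [mrk_eq_ncard_of_isBasis hE (hs x hx y hy).isBasis_closure, Set.ncard_pair hxy]

theorem Matroid.IsFlat.eq_closure_pair_of_mrk_eq_two (hE : M.E.Finite) (hs : Simple M)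
    {F : Set α} {x y : α} (hF : M.IsFlat F) (h2 : mrk M F = 2) (hx : x ∈ F) (hy : y ∈ F)
    (hxy : x ≠ y) :
    F = M.closure {x, y} := by
  have hxyF : ({x, y} : Set α) ⊆ F := Set.insert_subset hx (Set.singleton_subset_iff.mpr hy)
  obtain ⟨J, hJ, hxyJ⟩ :=
    (hs x (hF.subset_ground hx) y (hF.subset_ground hy)).subset_isBasis_of_subset hxyF
  have hJ_eq : ({x, y} : Set α) = J := by
    refine Set.eq_of_subset_of_ncard_le hxyJ ?_ (hE.subset hJ.indep.subset_ground)
    rw [← mrk_eq_ncard_of_isBasis hE hJ, h2, Set.ncard_pair hxy]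
  refine subset_antisymm ?_ (hF.closure ▸ M.closure_subset_closure hxyF)
  exact hJ_eq ▸ hJ.subset_closure

open scoped Classical in
noncomputable def lineFinset (M : Matroid α) (hE : M.E.Finite) : Finset (Finset α) :=
  hE.toFinset.powerset.filter fun L => M.IsFlat L ∧ mrk M L = 2

theorem mem_lineFinset {hE : M.E.Finite} {L : Finset α} :
    L ∈ lineFinset M hE ↔ M.IsFlat L ∧ mrk M L = 2 := by
  classical
  simp only [lineFinset, mem_filter, mem_powerset, and_iff_right_iff_imp, and_imp]
  exact fun hL _ => by simpa using hL.subset_ground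

theorem t_eq_card_filter_lineFinset (hE : M.E.Finite) (m : ℕ) :
    t M m = #{L ∈ lineFinset M hE | L.card = m} := by
  have h : {F : Set α | M.IsFlat F ∧ mrk M F = 2 ∧ F.ncard = m} =
      (↑) '' (↑{L ∈ lineFinset M hE | L.card = m} : Set (Finset α)) := by
    ext F
    simp only [Set.mem_ofPred_eq, Set.mem_image, coe_filter, mem_lineFinset]
    constructor
    · rintro ⟨hF, h2, rfl⟩
      have hfin := hE.subset hF.subset_ground
      exact ⟨hfin.toFinset, by simp [hF, h2, Set.ncard_eq_toFinset_card F hfin]⟩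
    · rintro ⟨L, ⟨⟨hL, h2⟩, rfl⟩, rfl⟩
      exact ⟨hL, h2, Set.ncard_coe_finset L⟩
  rw [t, h, Set.ncard_image_of_injective _ coe_injective, Set.ncard_coe_finset]

theorem c2_eq_sum_lineFinset (hE : M.E.Finite) :
    c2 M = 3 - 2 * (hE.toFinset.card : ℤ) + ↑(∑ L ∈ lineFinset M hE, (L.card - 1)) := by
  classical
  have hcard : ∀ L ∈ lineFinset M hE, L.card ∈ Icc 2 M.E.ncard := by
    intro L hL
    obtain ⟨hF, h2⟩ := mem_lineFinset.mp hL
    rw [← Set.ncard_coe_finset]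
    exact mem_Icc.mpr ⟨two_le_ncard_of_mrk_eq_two hE hF.subset_ground h2,
      Set.ncard_le_ncard hF.subset_ground hE⟩
  rw [c2, Set.ncard_eq_toFinset_card _ hE, Nat.cast_sum, ← Set.ncard_eq_toFinset_card _ hE,
    ← sum_fiberwise_of_maps_to hcard]
  congr 1
  refine sum_congr rfl fun m hm => ?_
  rw [t_eq_card_filter_lineFinset hE, sum_congr rfl fun L hL => by rw [(mem_filter.mp hL).2],
    sum_const, nsmul_eq_mul, mul_comm, Nat.cast_sub (one_le_two.trans (mem_Icc.mp hm).1)]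
  push_cast
  ring

theorem isLinearSpace_lineFinset (hE : M.E.Finite) (hs : Simple M) :
    IsLinearSpace hE.toFinset (lineFinset M hE) where
  subset_of_mem L hL := by
    simpa [← coe_subset] using (mem_lineFinset.mp hL).1.subset_ground
  exists_mem_of_ne x hx y hy hxy := by
    rw [Set.Finite.mem_toFinset] at hx hy
    have hfin := hE.subset (M.closure_subset_ground {x, y})
    refine ⟨hfin.toFinset, mem_lineFinset.mpr ?_, ?_⟩
    · rw [hfin.coe_toFinset]
      exact ⟨M.isFlat_closure _, mrk_closure_pair hE hs hx hy hxy⟩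
    · have hsub :=
        M.subset_closure {x, y} (Set.insert_subset hx (Set.singleton_subset_iff.mpr hy))
      simp only [Set.Finite.mem_toFinset]
      exact ⟨hsub (by simp), hsub (by simp)⟩
  eq_of_mem_of_mem L hL L' hL' x y hxy hx hy hx' hy' := by
    obtain ⟨hF, h2⟩ := mem_lineFinset.mp hL
    obtain ⟨hF', h2'⟩ := mem_lineFinset.mp hL'
    exact coe_injective <| (hF.eq_closure_pair_of_mrk_eq_two hE hs h2 hx hy hxy).trans
      (hF'.eq_closure_pair_of_mrk_eq_two hE hs h2' hx' hy' hxy).symm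

theorem ground_notMem_lineFinset (hE : M.E.Finite) (hr : mrk M M.E = 3) :
    hE.toFinset ∉ lineFinset M hE := by
  rw [mem_lineFinset, hE.coe_toFinset, hr]
  omega

end Matroid

theorem stmt_5_general {α : Type*} (M : Matroid α) (hE : M.E.Finite)
    (hs : Simple M) (hr : mrk M M.E = 3) :
    0 ≤ c2 M := by
  have hbound := (isLinearSpace_lineFinset hE hs).two_mul_card_le
    (ground_notMem_lineFinset hE hr)
  rw [c2_eq_sum_lineFinset hE]
  omega

/-- For a simple rank-3 matroid, `c̄₂(M) ≥ 0`. -/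
theorem stmt_5 {α : Type*} (M : Matroid α) (n : ℕ) (hE : M.E.Finite)
    (hn : M.E.ncard = n) (h3 : 3 ≤ n) (hs : Simple M) (hr : mrk M M.E = 3) :
    0 ≤ c2 M :=
  stmt_5_general M hE hs hr
end

section
/- For every q ≥ 2, the ratio of the Chern numbers of the projective plane matroid satisfies c̄₁²(PG(2,q)) / c̄₂(PG(2,q)) = 3. -/
/- Chern numbers of matroids (Mannino). Background definitions. -/

open scoped Matroid
open Finset

open Paper

/-! When every line has the same size `k`, both Chern numbers collapse to a single term
`t_k`. For `PG(2,q)` one has `k = q + 1` and `t_k = n`, whence `c̄₁² - 3 c̄₂ = t_k - n = 0`,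
while `c̄₂ = (q - 1)² (q + 1)` is nonzero for `q ≥ 2`. -/

namespace Paper

variable {α : Type*} (M : Matroid α)

theorem sum_Icc_mul_t_eq_of_t_eq_zero {k : ℕ} (hk : k ∈ Finset.Icc 2 M.E.ncard)
    (ht : ∀ m, m ≠ k → t M m = 0) (f : ℕ → ℤ) :
    ∑ m ∈ Finset.Icc 2 M.E.ncard, f m * t M m = f k * t M k :=
  Finset.sum_eq_single_of_mem k hk fun m _ hm => by rw [ht m hm, Nat.cast_zero, mul_zero]

theorem c1sq_eq_of_t_eq_zero {k : ℕ} (hk : k ∈ Finset.Icc 2 M.E.ncard)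
    (ht : ∀ m, m ≠ k → t M m = 0) :
    c1sq M = 9 - 5 * (M.E.ncard : ℤ) + (3 * (k : ℤ) - 4) * t M k := by
  rw [c1sq, sum_Icc_mul_t_eq_of_t_eq_zero M hk ht]

theorem c2_eq_of_t_eq_zero {k : ℕ} (hk : k ∈ Finset.Icc 2 M.E.ncard)
    (ht : ∀ m, m ≠ k → t M m = 0) :
    c2 M = 3 - 2 * (M.E.ncard : ℤ) + ((k : ℤ) - 1) * t M k := by
  rw [c2, sum_Icc_mul_t_eq_of_t_eq_zero M hk ht]

section ProjectivePlane

variable {q : ℕ}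

theorem succ_mem_Icc_two_ncard (hq : 1 ≤ q) (hn : M.E.ncard = q ^ 2 + q + 1) :
    q + 1 ∈ Finset.Icc 2 M.E.ncard := by
  rw [hn, Finset.mem_Icc]
  constructor <;> nlinarith

theorem c1sq_eq_three_mul_c2 (hq : 1 ≤ q) (hn : M.E.ncard = q ^ 2 + q + 1)
    (ht : t M (q + 1) = q ^ 2 + q + 1) (ht' : ∀ m, m ≠ q + 1 → t M m = 0) :
    c1sq M = 3 * c2 M := by
  have hmem := succ_mem_Icc_two_ncard M hq hn
  rw [c1sq_eq_of_t_eq_zero M hmem ht', c2_eq_of_t_eq_zero M hmem ht', ht, hn]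
  push_cast
  ring

theorem c2_eq_sq_mul (hq : 1 ≤ q) (hn : M.E.ncard = q ^ 2 + q + 1)
    (ht : t M (q + 1) = q ^ 2 + q + 1) (ht' : ∀ m, m ≠ q + 1 → t M m = 0) :
    c2 M = ((q : ℤ) - 1) ^ 2 * (q + 1) := by
  rw [c2_eq_of_t_eq_zero M (succ_mem_Icc_two_ncard M hq hn) ht', ht, hn]
  push_cast
  ring

end ProjectivePlane

end Paper

theorem stmt_13_general {α : Type*} (M : Matroid α) (q : ℕ) (hq : 2 ≤ q)
    (hn : M.E.ncard = q ^ 2 + q + 1)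
    (ht : t M (q + 1) = q ^ 2 + q + 1) (ht' : ∀ m, m ≠ q + 1 → t M m = 0) :
    (c1sq M : ℚ) / (c2 M : ℚ) = 3 := by
  have hq1 : 1 ≤ q := by omega
  have hc2 : (c2 M : ℚ) ≠ 0 := by
    rw [c2_eq_sq_mul M hq1 hn ht ht']
    have : (q : ℚ) - 1 ≠ 0 := by
      rw [sub_ne_zero]; exact_mod_cast (by omega : q ≠ 1)
    push_cast
    positivity
  rw [c1sq_eq_three_mul_c2 M hq1 hn ht ht', Int.cast_mul, Int.cast_ofNat,
    mul_div_cancel_right₀ _ hc2]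

/-- For `q ≥ 2`, the ratio of Chern numbers of the projective plane matroid
`PG(2,q)` satisfies `c̄₁²/c̄₂ = 3`. -/
theorem stmt_13 {α : Type*} (M : Matroid α) (q : ℕ) (hq : 2 ≤ q) (hE : M.E.Finite)
    (hn : M.E.ncard = q ^ 2 + q + 1) (hs : Simple M) (hr : mrk M M.E = 3)
    (ht : t M (q + 1) = q ^ 2 + q + 1) (ht' : ∀ m, m ≠ q + 1 → t M m = 0) :
    (c1sq M : ℚ) / (c2 M : ℚ) = 3 :=
  stmt_13_general M q hq hn ht ht'
end

section
/- The Chern numbers of the uniform matroid U_{d+1,n} are c̄₁^{k₁}·…·c̄_d^{k_d}(U_{d+1,n}) = (−1)^d · Π_{i=1}^{d} C(n − (d−i) − 2, i)^{k_i}, for any nonnegative integers k₁,…,k_d with Σ i·k_i = d. -/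
open Finset

/- Each CSM cycle `csm_{d-i}` is an integer multiple of `B^i`, so the product is a multiple of
`B^{∑ i k_i} = B^d`, whose weight at the origin is the product of the coefficients; the signs
`(-1)^i` collect in the same way to `(-1)^{∑ i k_i} = (-1)^d`. -/

theorem Finset.prod_pow_mul_pow {ι M : Type*} [CommMonoid M] (s : Finset ι) (x : M)
    (c : ι → M) (e k : ι → ℕ) :
    ∏ i ∈ s, (x ^ e i * c i) ^ k i = x ^ (∑ i ∈ s, e i * k i) * ∏ i ∈ s, c i ^ k i := by
  simp only [mul_pow, ← pow_mul, prod_mul_distrib, prod_pow_eq_pow_sum]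

theorem stmt_18_general (d n : ℕ)
    (k : ℕ → ℕ) (hk : ∑ i ∈ Finset.Icc 1 d, i * k i = d)
    (A : Type*) [CommRing A] (B : A) (w : A → ℤ) (csm : ℕ → A)
    (hcsm : ∀ j, j ≤ d →
      csm j = (((-1 : ℤ) ^ (d - j)) * ((n - j - 2).choose (d - j) : ℤ)) • B ^ (d - j))
    (hw : ∀ z : ℤ, w (z • B ^ d) = z) :
    w (∏ i ∈ Finset.Icc 1 d, (csm (d - i)) ^ (k i)) =
      (-1 : ℤ) ^ d * ∏ i ∈ Finset.Icc 1 d, ((n - (d - i) - 2).choose i : ℤ) ^ (k i) := by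
  set c : ℕ → ℤ := fun i => (-1) ^ i * ((n - (d - i) - 2).choose i : ℤ) with hc
  have hcsm_eq : ∀ i ∈ Icc 1 d, csm (d - i) = B ^ i * (c i : A) := by
    intro i hi
    rw [hcsm _ (Nat.sub_le d i), Nat.sub_sub_self (mem_Icc.1 hi).2, zsmul_eq_mul, mul_comm]
  calc w (∏ i ∈ Icc 1 d, csm (d - i) ^ k i)
      = w ((∏ i ∈ Icc 1 d, c i ^ k i) • B ^ d) := by
        rw [prod_congr rfl fun i hi => by rw [hcsm_eq i hi], prod_pow_mul_pow, hk, zsmul_eq_mul,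
          mul_comm, Int.cast_prod]
        simp only [Int.cast_pow]
    _ = ∏ i ∈ Icc 1 d, c i ^ k i := hw _
    _ = _ := by rw [hc, prod_pow_mul_pow, hk]

/-- The Chern numbers of the uniform matroid `U_{d+1,n}`:
`c̄₁^{k₁}⋯c̄_d^{k_d}(U_{d+1,n}) = (-1)^d ∏_{i=1}^d C(n-(d-i)-2, i)^{k_i}`
whenever `∑ i·k_i = d`.

The Minkowski weight ring of the Bergman fan is encoded abstractly by a
commutative ring `A`. The element `B` is the Bergman fan of `U_{d,n}` with unit
weights, whose powers `B^k` are the Bergman fans of `U_{d-k+1,n}` with unit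
weights; the CSM cycles of `U_{d+1,n}` satisfy
`csm_j = (-1)^{d-j} C(n-j-2, d-j) · B^{d-j}`, and the weight-at-the-origin map
`w` satisfies `w (z • B^d) = z`. The Chern number is
`w (csm_{d-1}^{k₁} ⋯ csm_0^{k_d}) = w (∏_{i=1}^d csm_{d-i}^{k_i})`. -/
theorem stmt_18 (d n : ℕ) (hd : 1 ≤ d) (hn : d + 1 ≤ n)
    (k : ℕ → ℕ) (hk : ∑ i ∈ Finset.Icc 1 d, i * k i = d)
    (A : Type*) [CommRing A] (B : A) (w : A → ℤ) (csm : ℕ → A)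
    (hcsm : ∀ j, j ≤ d →
      csm j = (((-1 : ℤ) ^ (d - j)) * ((n - j - 2).choose (d - j) : ℤ)) • B ^ (d - j))
    (hw : ∀ z : ℤ, w (z • B ^ d) = z) :
    w (∏ i ∈ Finset.Icc 1 d, (csm (d - i)) ^ (k i)) =
      (-1 : ℤ) ^ d * ∏ i ∈ Finset.Icc 1 d, ((n - (d - i) - 2).choose i : ℤ) ^ (k i) :=
  stmt_18_general d n k hk A B w csm hcsm hw
end
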